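/- arXiv:2111.03529 — 6 statements merged into one kernel-verified Lean document; each statement's English description precedes it below -/
import Mathlib

section
/- For every y ∈ ℝ, (1/(4π)) ∫_{-π}^{π} log(cosh(y) - cos(x)) dx = (1/2)(|y| - log 2). -/
open Real MeasureTheory

/-!
Writing `a = exp (-|y|)` and `z = exp (i x)`, one has
`cosh y - cos x = (exp |y| / 2) * ‖z - a‖ ^ 2`. So the integral is `2π (|y| - log 2)` plus twice
the integral of `log ‖z - a‖` over the unit circle, and that circle average is `log⁺ ‖a‖ = 0`
since `‖a‖ ≤ 1` (the case `‖a‖ = 1`, i.e. `y = 0`, included).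
-/

section CircleMap

variable {E : Type*} [NormedAddCommGroup E]

theorem CircleIntegrable.intervalIntegrable {f : ℂ → E} {c : ℂ} {R : ℝ}
    (hf : CircleIntegrable f c R) (a b : ℝ) :
    IntervalIntegrable (fun θ ↦ f (circleMap c R θ)) volume a b :=
  ((periodic_circleMap c R).comp f).intervalIntegrable₀ two_pi_pos.ne' hf a b

theorem integral_circleMap_neg_pi_pi [NormedSpace ℝ E] (f : ℂ → E) (c : ℂ) (R : ℝ) :
    ∫ θ in (-π)..π, f (circleMap c R θ) = (2 * π) • circleAverage f c R := by
  have h := ((periodic_circleMap c R).comp f).intervalIntegral_add_eq (-π) 0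
  rw [show -π + 2 * π = π by ring, zero_add] at h
  rw [circleAverage_def, smul_inv_smul₀ two_pi_pos.ne']
  exact h

end CircleMap

theorem norm_circleMap_zero_one_sub_ofReal_sq (x r : ℝ) :
    ‖circleMap 0 1 x - r‖ ^ 2 = 1 - 2 * r * cos x + r ^ 2 := by
  rw [Complex.sq_norm, Complex.normSq_apply, circleMap_zero]
  simp only [Complex.sub_re, Complex.sub_im, Complex.ofReal_one, one_mul,
    Complex.exp_ofReal_mul_I_re, Complex.exp_ofReal_mul_I_im, Complex.ofReal_re,
    Complex.ofReal_im, sub_zero]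
  linear_combination sin_sq_add_cos_sq x

theorem cosh_sub_cos_eq (y x : ℝ) :
    cosh y - cos x = exp |y| / 2 * ‖circleMap 0 1 x - ↑(exp (-|y|))‖ ^ 2 := by
  have h : exp |y| * exp (-|y|) = 1 := by rw [← exp_add, add_neg_cancel, exp_zero]
  rw [norm_circleMap_zero_one_sub_ofReal_sq, ← cosh_abs, cosh_eq]
  linear_combination (cos x - exp (-|y|) / 2) * h

theorem cosh_sub_cos_pos (y : ℝ) {x : ℝ} (hx : cos x ≠ 1) : 0 < cosh y - cos x := by
  linarith [one_le_cosh y, (cos_le_one x).lt_of_ne hx]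

theorem log_cosh_sub_cos (y : ℝ) {x : ℝ} (hx : cos x ≠ 1) :
    log (cosh y - cos x) = |y| - log 2 + 2 * log ‖circleMap 0 1 x - ↑(exp (-|y|))‖ := by
  have hpos := cosh_sub_cos_pos y hx
  rw [cosh_sub_cos_eq] at hpos ⊢
  have hnorm : ‖circleMap 0 1 x - ↑(exp (-|y|))‖ ^ 2 ≠ 0 :=
    (pos_of_mul_pos_right hpos (by positivity)).ne'
  rw [log_mul (by positivity) hnorm, log_div (exp_pos _).ne' two_ne_zero, log_exp, log_pow]
  push_cast; ring

theorem integral_log_cosh_sub_cos (y : ℝ) :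
    ∫ x in (-π)..π, log (cosh y - cos x) = 2 * π * (|y| - log 2) := by
  set a : ℂ := ↑(exp (-|y|))
  have hcos : ∀ᵐ x, x ∈ Set.uIoc (-π) π → cos x ≠ 1 := by
    filter_upwards [Measure.ae_ne volume 0] with x hx0 hx
    rw [Set.uIoc_of_le (by linarith [pi_pos])] at hx
    rw [Ne, cos_eq_one_iff_of_lt_of_lt (by linarith [hx.1, pi_pos]) (by linarith [hx.2, pi_pos])]
    exact hx0
  have hint := (circleIntegrable_log_norm_sub_const (a := a) (c := 0) 1).intervalIntegrable (-π) π
  have ha : log⁺ ‖a‖ = 0 := by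
    rw [posLog_eq_zero_iff, abs_norm, Complex.norm_real, norm_of_nonneg (exp_pos _).le]
    exact exp_le_one_iff.mpr (neg_nonpos.mpr (abs_nonneg y))
  calc ∫ x in (-π)..π, log (cosh y - cos x)
      = ∫ x in (-π)..π, (|y| - log 2 + 2 * log ‖circleMap 0 1 x - a‖) :=
        intervalIntegral.integral_congr_ae (hcos.mono fun x hx hmem ↦ log_cosh_sub_cos y (hx hmem))
    _ = 2 * π * (|y| - log 2) + 2 * ((2 * π) • circleAverage (log ‖· - a‖) 0 1) := by
        rw [intervalIntegral.integral_add intervalIntegrable_const (hint.const_mul 2),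
          intervalIntegral.integral_const_mul, intervalIntegral.integral_const,
          integral_circleMap_neg_pi_pi (log ‖· - a‖), smul_eq_mul]
        ring
    _ = 2 * π * (|y| - log 2) := by
        rw [circleAverage_log_norm_sub_const_eq_posLog, ha]; simp

theorem couette_log_kernel_average (y : ℝ) :
    (1 / (4 * π)) * (∫ x in (-π)..π, Real.log (Real.cosh y - Real.cos x))
      = (1 / 2) * (|y| - Real.log 2) := by
  rw [integral_log_cosh_sub_cos]
  field_simp
  ring
end

section
/- Let M > 1. There exist κ₀ = κ₀(M) > 0 and λ* = λ*(M) > 0 such that for all 0 ≤ κ ≤ κ₀ and all integers m with 1 ≤ m ≤ M, and any function φ'_κ : [-1,1] → ℝ that is continuous, negative on (-1,1), and satisfies ‖φ'_κ + 1/2‖_{L¹([-1,1])} ≤ C κ, the equation 1 = (1/(2m)) ∫_{-1}^{1} (-φ'_κ(z̄)) / (1 + λ - z̄) dz̄ has a unique solution λ = λ₁ with λ₁ ≥ λ*. -/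
/-!
Write `J(λ) = ∫_{-1}^1 g z / (1 + λ - z) dz` with `g = -φ'`, so the equation reads `J(λ) = 2m`.
Since `g > 0` on `(-1, 1)`, `J` is continuous and strictly decreasing on `(0, ∞)`. Splitting
`g = 1/2 + (g - 1/2)` gives `|J(λ) - ½ log ((2 + λ) / λ)| ≤ δ / λ` with `δ = ‖g - 1/2‖_{L¹}`.
For `λ* = e^{-8M}` and `δ ≤ λ*` this yields `J(λ*) ≥ 4M - 1 > 2m` and `J(1) ≤ ½ log 3 + δ ≤ 2 ≤ 2m`,
so the intermediate value theorem and monotonicity give exactly one root in `[λ*, ∞)`.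
-/

open Real MeasureTheory Set intervalIntegral

noncomputable def eigenIntegral (g : ℝ → ℝ) (lam : ℝ) : ℝ :=
  ∫ z in (-1:ℝ)..1, g z / (1 + lam - z)

lemma intervalIntegrable_div_one_add_sub {g : ℝ → ℝ} (hg : ContinuousOn g (Icc (-1) 1))
    {lam : ℝ} (hlam : 0 < lam) :
    IntervalIntegrable (fun z => g z / (1 + lam - z)) volume (-1) 1 := by
  refine ContinuousOn.intervalIntegrable ?_
  rw [uIcc_of_le (by norm_num)]
  exact hg.div (by fun_prop) fun z hz => by linarith [hz.2]

lemma integral_one_div_one_add_sub {lam : ℝ} (hlam : 0 < lam) :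
    ∫ z in (-1:ℝ)..1, 1 / (1 + lam - z) = log ((2 + lam) / lam) := by
  rw [integral_comp_sub_left (fun u => 1 / u), integral_one_div]
  · ring_nf
  · rw [uIcc_of_le (by linarith)]
    intro h
    linarith [h.1]

lemma abs_eigenIntegral_sub_log_le {g : ℝ → ℝ} (hg : ContinuousOn g (Icc (-1) 1)) (c : ℝ)
    {lam : ℝ} (hlam : 0 < lam) :
    |eigenIntegral g lam - c * log ((2 + lam) / lam)| ≤ (∫ z in (-1:ℝ)..1, |g z - c|) / lam := by
  have hsplit : eigenIntegral g lam - c * log ((2 + lam) / lam)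
      = ∫ z in (-1:ℝ)..1, (g z - c) / (1 + lam - z) := by
    rw [← integral_one_div_one_add_sub hlam, ← intervalIntegral.integral_const_mul, eigenIntegral,
      ← integral_sub (intervalIntegrable_div_one_add_sub hg hlam)
        ((intervalIntegrable_div_one_add_sub continuousOn_const hlam).const_mul c)]
    congr 1 with z
    ring
  rw [hsplit, ← intervalIntegral.integral_div, ← Real.norm_eq_abs]
  refine norm_integral_le_of_norm_le (by norm_num : (-1:ℝ) ≤ 1) (ae_of_all _ fun z hz => ?_) ?_
  · rw [Real.norm_eq_abs, abs_div, abs_of_pos (by linarith [hz.2] : 0 < 1 + lam - z)]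
    exact div_le_div_of_nonneg_left (abs_nonneg _) hlam (by linarith [hz.2])
  · refine ContinuousOn.intervalIntegrable ?_
    rw [uIcc_of_le (by norm_num)]
    exact (hg.sub continuousOn_const).abs.div_const _

lemma eigenIntegral_strictAntiOn {g : ℝ → ℝ} (hg : ContinuousOn g (Icc (-1) 1))
    (hpos : ∀ z ∈ Ioo (-1:ℝ) 1, 0 < g z) : StrictAntiOn (eigenIntegral g) (Ioi 0) := by
  intro a ha b hb hab
  have hint_a := intervalIntegrable_div_one_add_sub hg ha
  have hint_b := intervalIntegrable_div_one_add_sub hg hb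
  have hdiff : 0 < ∫ z in (-1:ℝ)..1, (g z / (1 + a - z) - g z / (1 + b - z)) :=
    intervalIntegral_pos_of_pos_on (hint_a.sub hint_b)
      (fun z hz => sub_pos.2 <|
        div_lt_div_of_pos_left (hpos z hz) (by linarith [hz.2, mem_Ioi.1 ha]) (by linarith))
      (by norm_num)
  rw [integral_sub hint_a hint_b] at hdiff
  exact sub_pos.1 hdiff

lemma eigenIntegral_continuousOn {g : ℝ → ℝ} (hg : ContinuousOn g (Icc (-1) 1)) :
    ContinuousOn (eigenIntegral g) (Ioi 0) := by
  rintro lam₀ (hlam₀ : 0 < lam₀)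
  refine (continuousAt_of_dominated_interval (bound := fun z => |g z| / (lam₀ / 2))
    ?_ ?_ ?_ ?_).continuousWithinAt
  · filter_upwards [Ioi_mem_nhds hlam₀] with lam hlam
    exact (intervalIntegrable_div_one_add_sub hg hlam).def'.aestronglyMeasurable
  · filter_upwards [Ioi_mem_nhds (half_lt_self hlam₀)] with lam (hlam : lam₀ / 2 < lam)
    refine ae_of_all _ fun z hz => ?_
    rw [uIoc_of_le (by norm_num)] at hz
    rw [Real.norm_eq_abs, abs_div, abs_of_pos (by linarith [hz.2] : 0 < 1 + lam - z)]
    exact div_le_div_of_nonneg_left (abs_nonneg _) (by positivity) (by linarith [hz.2])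
  · refine ContinuousOn.intervalIntegrable ?_
    rw [uIcc_of_le (by norm_num)]
    exact hg.abs.div_const _
  · refine ae_of_all _ fun z hz => ?_
    rw [uIoc_of_le (by norm_num)] at hz
    exact continuousAt_const.div (by fun_prop) (by linarith [hz.2])

lemma StrictAntiOn.existsUnique_eq_of_continuousOn {α δ : Type*}
    [ConditionallyCompleteLinearOrder α] [TopologicalSpace α] [OrderTopology α] [DenselyOrdered α]
    [LinearOrder δ] [TopologicalSpace δ] [OrderClosedTopology δ] {f : α → δ} {a b : α} {y : δ}
    (hf : StrictAntiOn f (Ici a))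
    (hc : ContinuousOn f (Icc a b)) (hab : a ≤ b) (hy : y ∈ Icc (f b) (f a)) :
    ∃! x, a ≤ x ∧ f x = y := by
  obtain ⟨x, hx, rfl⟩ := intermediate_value_Icc' hab hc hy
  exact ⟨x, ⟨hx.1, rfl⟩, fun x' hx' => hf.injOn hx'.1 hx.1 hx'.2⟩

theorem eigenvalue_equation_unique_solution (C : ℝ) (hC : 0 < C) (M : ℝ) (hM : 1 < M) :
    ∃ κ₀ > (0:ℝ), ∃ lamstar > (0:ℝ), ∀ κ : ℝ, 0 ≤ κ → κ ≤ κ₀ →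
      ∀ m : ℕ, 1 ≤ m → (m : ℝ) ≤ M →
        ∀ φ' : ℝ → ℝ, ContinuousOn φ' (Set.Icc (-1) 1) →
          (∀ z ∈ Set.Ioo (-1:ℝ) 1, φ' z < 0) →
          (∫ z in (-1:ℝ)..1, |φ' z + 1/2|) ≤ C * κ →
          ∃! lam : ℝ, lamstar ≤ lam ∧
            1 = (1 / (2 * m)) * ∫ z in (-1:ℝ)..1, (-φ' z) / (1 + lam - z) := by
  set l := exp (-(8 * M))
  have hl : 0 < l := exp_pos _
  refine ⟨l / C, by positivity, l, hl, fun κ _ hκ m hm hmM φ' hcont hneg hL1 => ?_⟩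
  set g := fun z => -φ' z
  have hg : ContinuousOn g (Icc (-1) 1) := hcont.neg
  have hm : (1:ℝ) ≤ m := by exact_mod_cast hm
  have hδ : ∫ z in (-1:ℝ)..1, |g z - 1/2| ≤ l := by
    simp only [g, show ∀ z, -φ' z - 1/2 = -(φ' z + 1/2) from fun z => by ring, abs_neg]
    exact hL1.trans ((le_div_iff₀' hC).1 hκ)
  have hl1 : l ≤ 1 := exp_le_one_iff.2 (by linarith)
  have hlower : 2 * m ≤ eigenIntegral g l := by
    have hlog : 8 * M ≤ log ((2 + l) / l) :=
      calc 8 * M = log (1 / l) := by rw [one_div, log_inv, log_exp, neg_neg]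
        _ ≤ log ((2 + l) / l) := by gcongr; linarith
    have hδl : (∫ z in (-1:ℝ)..1, |g z - 1/2|) / l ≤ 1 := (div_le_one hl).2 hδ
    linarith [(abs_le.1 (abs_eigenIntegral_sub_log_le hg (1/2) hl)).1]
  have hupper : eigenIntegral g 1 ≤ 2 * m := by
    have hlog3 := log_le_sub_one_of_pos (by norm_num : (0:ℝ) < (2 + 1) / 1)
    linarith [(abs_le.1 (abs_eigenIntegral_sub_log_le hg (1/2) one_pos)).2]
  have hroot : ∃! lam, l ≤ lam ∧ eigenIntegral g lam = 2 * m :=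
    ((eigenIntegral_strictAntiOn hg fun z hz => neg_pos.2 (hneg z hz)).mono
      fun _ hx => lt_of_lt_of_le hl hx).existsUnique_eq_of_continuousOn
      ((eigenIntegral_continuousOn hg).mono fun _ hx => lt_of_lt_of_le hl hx.1) hl1
      ⟨hupper, hlower⟩
  refine (existsUnique_congr fun lam => and_congr_right fun _ => ?_).2 hroot
  rw [one_div, eq_comm, inv_mul_eq_one₀ (by positivity), eq_comm]
  rfl
end

section
/- Let λ₁ > 0 and integer m ≥ 1 satisfy 1 = (1/(2m)) ∫_{-1}^1 (-φ'(z̄))/(1 + λ₁ - z̄) dz̄, let b₀(z) = 1/(1 + λ₁ - z), and let G ∈ L²([-1,1]). Define λ := (∫_{-1}^1 G b₀ φ' dz̄) / (∫_{-1}^1 b₀² φ' dz̄) (the denominator is nonzero since φ' < 0 a.e. and b₀ > 0). Then f(z) := (G(z) - λ b₀(z)) b₀(z) solves (1 + λ₁ - z) f(z) + (1/(2m)) ∫_{-1}^1 φ'(z̄) f(z̄) dz̄ + λ b₀(z) = G(z). -/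
/-!
The correction coefficient `lam` is the ratio that makes the moment `∫ φ' f` of
`f = (G - lam b₀) b₀` vanish: that moment is `∫ G b₀ φ' - lam ∫ b₀² φ'`, and the denominator
`∫ b₀² φ'` is negative because `b₀ > 0` and `φ' < 0` a.e. With the nonlocal term gone, the
equation reduces pointwise to `(1 + lam₁ - z) b₀(z) = 1`.
-/

open Real MeasureTheory

/-- No integrability of `f` is needed: otherwise `∫ f` is the junk value `0`, so the ratio
vanishes and the left-hand side is `∫ f = 0` again. -/
theorem intervalIntegral.integral_sub_div_integral_mul_eq_zero {μ : Measure ℝ} {a b : ℝ}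
    (f : ℝ → ℝ) {g : ℝ → ℝ} (hg : IntervalIntegrable g μ a b) (hg0 : ∫ x in a..b, g x ∂μ ≠ 0) :
    ∫ x in a..b, f x - (∫ x in a..b, f x ∂μ) / (∫ x in a..b, g x ∂μ) * g x ∂μ = 0 := by
  by_cases hf : IntervalIntegrable f μ a b
  · rw [integral_sub hf (hg.const_mul _), integral_const_mul, div_mul_cancel₀ _ hg0, sub_self]
  · simp [integral_undef hf]

theorem intervalIntegral_pos_of_ae_pos_on {f : ℝ → ℝ} {a b : ℝ}
    (hfi : IntervalIntegrable f volume a b)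
    (hpos : ∀ᵐ x ∂volume.restrict (Set.Ioo a b), 0 < f x) (hab : a < b) :
    0 < ∫ x in a..b, f x := by
  rw [intervalIntegral.integral_of_le hab.le, ← Measure.restrict_congr_set Ioo_ae_eq_Ioc,
    integral_pos_iff_support_of_nonneg_ae (hpos.mono fun _ => le_of_lt)
      (hfi.1.mono_set Set.Ioo_subset_Ioc_self)]
  have hsupp := measure_mono_ae (μ := volume.restrict (Set.Ioo a b)) (s := Set.univ)
    (t := Function.support f) (hpos.mono fun _ hx _ => hx.ne')
  exact (ENNReal.ofReal_pos.2 (sub_pos.2 hab)).trans_le (by simpa using hsupp)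

theorem solvability_with_rank_one_correction_general (lam₁ : ℝ) (hlam : 0 < lam₁)
    (m : ℕ)
    (φ' : ℝ → ℝ) (hφmeas : Measurable φ') (Cφ : ℝ) (hφb : ∀ z, |φ' z| ≤ Cφ)
    (hφneg : ∀ᵐ z ∂(MeasureTheory.volume.restrict (Set.Ioo (-1:ℝ) 1)), φ' z < 0)
    (G : ℝ → ℝ) :
    let b₀ : ℝ → ℝ := fun z => 1 / (1 + lam₁ - z)
    let lam : ℝ := (∫ z in (-1:ℝ)..1, G z * b₀ z * φ' z)
        / (∫ z in (-1:ℝ)..1, (b₀ z) ^ 2 * φ' z)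
    ∀ z ∈ Set.Icc (-1:ℝ) 1,
      (1 + lam₁ - z) * ((G z - lam * b₀ z) * b₀ z)
          + (1 / (2 * m)) * (∫ w in (-1:ℝ)..1, φ' w * ((G w - lam * b₀ w) * b₀ w))
          + lam * b₀ z
        = G z := by
  intro b₀ lam z hz
  have hpos : ∀ w ∈ Set.Icc (-1:ℝ) 1, 0 < 1 + lam₁ - w := fun w hw => by linarith [hw.2]
  have hb₀φ : IntervalIntegrable (fun w => b₀ w ^ 2 * φ' w) volume (-1) 1 := by
    refine (intervalIntegrable_const.mono_fun' hφmeas.aestronglyMeasurable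
      (ae_of_all _ hφb)).continuousOn_mul ?_
    refine (continuousOn_const.div (by fun_prop) fun w hw => (hpos w ?_).ne').pow 2
    simpa using hw
  have hD : ∫ w in (-1:ℝ)..1, b₀ w ^ 2 * φ' w < 0 := by
    have hnegD := intervalIntegral_pos_of_ae_pos_on hb₀φ.neg ?_ (by norm_num)
    · simpa [intervalIntegral.integral_neg] using hnegD
    filter_upwards [hφneg, ae_restrict_mem measurableSet_Ioo] with w hw hw'
    exact neg_pos.2 (mul_neg_of_pos_of_neg
      (pow_pos (one_div_pos.2 (hpos w (Set.Ioo_subset_Icc_self hw'))) 2) hw)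
  have hmoment : ∫ w in (-1:ℝ)..1, φ' w * ((G w - lam * b₀ w) * b₀ w) = 0 := by
    convert intervalIntegral.integral_sub_div_integral_mul_eq_zero
      (fun w => G w * b₀ w * φ' w) hb₀φ hD.ne using 3
    ring
  have hb₀z : (1 + lam₁ - z) * b₀ z = 1 := mul_one_div_cancel (hpos z hz).ne'
  rw [hmoment]
  linear_combination (G z - lam * b₀ z) * hb₀z

theorem solvability_with_rank_one_correction (lam₁ : ℝ) (hlam : 0 < lam₁)
    (m : ℕ) (hm : 1 ≤ m)
    (φ' : ℝ → ℝ) (hφmeas : Measurable φ') (Cφ : ℝ) (hφb : ∀ z, |φ' z| ≤ Cφ)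
    (hφneg : ∀ᵐ z ∂(MeasureTheory.volume.restrict (Set.Ioo (-1:ℝ) 1)), φ' z < 0)
    (heq : 1 = (1 / (2 * m)) * ∫ z in (-1:ℝ)..1, (-φ' z) / (1 + lam₁ - z))
    (G : ℝ → ℝ) (hG : MemLp G 2 (MeasureTheory.volume.restrict (Set.Icc (-1:ℝ) 1))) :
    let b₀ : ℝ → ℝ := fun z => 1 / (1 + lam₁ - z)
    let lam : ℝ := (∫ z in (-1:ℝ)..1, G z * b₀ z * φ' z)
        / (∫ z in (-1:ℝ)..1, (b₀ z) ^ 2 * φ' z)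
    ∀ z ∈ Set.Icc (-1:ℝ) 1,
      (1 + lam₁ - z) * ((G z - lam * b₀ z) * b₀ z)
          + (1 / (2 * m)) * (∫ w in (-1:ℝ)..1, φ' w * ((G w - lam * b₀ w) * b₀ w))
          + lam * b₀ z
        = G z :=
  solvability_with_rank_one_correction_general lam₁ hlam m φ' hφmeas Cφ hφb hφneg G
end

section
/- Let λ₁ > 0 and integers m ≠ n, m, n ≥ 1 satisfy 1 = (1/(2m)) ∫_{-1}^1 (-φ'(z̄))/(1 + λ₁ - z̄) dz̄, with φ' ∈ L^∞([-1,1]). Then for every F ∈ L²([-1,1]), the unique solution f ∈ L²([-1,1]) of (1 + λ₁ - z) f(z) + (1/(2n)) ∫_{-1}^1 φ'(z̄) f(z̄) dz̄ = F(z) is f(z) = (1/(1+λ₁-z)) ( F(z) + (1/(2(m-n))) ∫_{-1}^1 φ'(z̄) F(z̄)/(1+λ₁-z̄) dz̄ ). -/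
/-!
The equation `a f + β ⟨k, f⟩ = F` is a rank-one perturbation of multiplication by `a`, so every
solution is `f = (F + c) / a` for the constant `c = -β ⟨k, f⟩`. Pairing this ansatz with `k` turns
the equation into the scalar condition `c (1 + β ⟨k, 1/a⟩) = -β ⟨k, F/a⟩`. Here `a = 1 + λ₁ - z`,
`k = φ'`, `β = 1/(2n)`, and the eigenvalue relation for `m` says `⟨k, 1/a⟩ = -2m`, so the factor
`1 + β ⟨k, 1/a⟩ = (n - m)/n` is nonzero and `c = ⟨k, F/a⟩ / (2(m - n))` is uniquely determined.
-/

open MeasureTheory Set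

section RankOnePerturbation

variable {α : Type*} [MeasurableSpace α] {μ : Measure α} {s : Set α} {a k F : α → ℝ} {β c : ℝ}

theorem integral_mul_one_div_mul_add_const (hK : Integrable (fun x => k x / a x) μ)
    (hJ : Integrable (fun x => k x * F x / a x) μ) (c : ℝ) :
    ∫ x, k x * (1 / a x * (F x + c)) ∂μ =
      ∫ x, k x * F x / a x ∂μ + c * ∫ x, k x / a x ∂μ := by
  have hpt : (fun x => k x * (1 / a x * (F x + c))) =
      fun x => k x * F x / a x + c * (k x / a x) := by
    funext x; ring
  rw [hpt, integral_add hJ (hK.const_mul c), integral_const_mul]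

theorem rankOne_solution_spec (ha : ∀ x ∈ s, a x ≠ 0) (hK : Integrable (fun x => k x / a x) μ)
    (hJ : Integrable (fun x => k x * F x / a x) μ)
    (hc : c * (1 + β * ∫ x, k x / a x ∂μ) = -β * ∫ x, k x * F x / a x ∂μ) :
    ∀ x ∈ s, a x * (1 / a x * (F x + c)) + β * ∫ y, k y * (1 / a y * (F y + c)) ∂μ = F x := by
  intro x hx
  rw [integral_mul_one_div_mul_add_const hK hJ, ← mul_assoc, mul_one_div_cancel (ha x hx)]
  linear_combination hc

theorem rankOne_solution_unique (hs : ∀ᵐ x ∂μ, x ∈ s) (ha : ∀ x ∈ s, a x ≠ 0)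
    (hK : Integrable (fun x => k x / a x) μ) (hJ : Integrable (fun x => k x * F x / a x) μ)
    (hK_ne : 1 + β * ∫ x, k x / a x ∂μ ≠ 0)
    (hc : c * (1 + β * ∫ x, k x / a x ∂μ) = -β * ∫ x, k x * F x / a x ∂μ)
    {f : α → ℝ} (hf : ∀ x ∈ s, a x * f x + β * ∫ y, k y * f y ∂μ = F x) :
    ∀ x ∈ s, f x = 1 / a x * (F x + c) := by
  set I := ∫ y, k y * f y ∂μ
  have hf_eq : ∀ x ∈ s, f x = 1 / a x * (F x + -(β * I)) := by
    intro x hx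
    rw [← hf x hx]
    field_simp [ha x hx]
    ring
  have hI : I = ∫ x, k x * (1 / a x * (F x + -(β * I))) ∂μ :=
    integral_congr_ae (hs.mono fun x hx => by simp only [hf_eq x hx])
  rw [integral_mul_one_div_mul_add_const hK hJ] at hI
  have hc_eq : c = -(β * I) :=
    mul_right_cancel₀ hK_ne (by linear_combination hc + β * hI)
  intro x hx
  rw [hc_eq, hf_eq x hx]

/-- The Bochner integral of a non-integrable function is `0`, so the relation forces integrability. -/
theorem integrable_div_and_integral_eq_of_eigenvalue_relation {m : ℝ}
    (heq : 1 = 1 / (2 * m) * ∫ x, -k x / a x ∂μ) :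
    Integrable (fun x => k x / a x) μ ∧ ∫ x, k x / a x ∂μ = -(2 * m) := by
  have hm : m ≠ 0 := by
    rintro rfl
    simp at heq
  have hK : ∫ x, k x / a x ∂μ = -(2 * m) := by
    simp only [neg_div, integral_neg] at heq
    field_simp at heq
    linarith
  exact ⟨Integrable.of_integral_ne_zero (by simpa [hK] using hm), hK⟩

end RankOnePerturbation

theorem norm_div_one_add_sub_le {lam₁ u C z : ℝ} (hlam : 0 < lam₁) (hu : |u| ≤ C) (hz : z ≤ 1) :
    ‖u / (1 + lam₁ - z)‖ ≤ C / lam₁ := by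
  have ha_ge : lam₁ ≤ 1 + lam₁ - z := by linarith
  rw [Real.norm_eq_abs, abs_div, abs_of_pos (hlam.trans_le ha_ge)]
  exact div_le_div₀ ((abs_nonneg u).trans hu) hu hlam ha_ge

theorem inversion_off_resonant_mode_general (lam₁ : ℝ) (hlam : 0 < lam₁)
    (m n : ℕ) (hn : 1 ≤ n) (hmn : m ≠ n)
    (φ' : ℝ → ℝ) (Cφ : ℝ) (hφb : ∀ z, |φ' z| ≤ Cφ)
    (heq : 1 = (1 / (2 * m)) * ∫ z in (-1:ℝ)..1, (-φ' z) / (1 + lam₁ - z))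
    (F : ℝ → ℝ) (hF : MemLp F 2 (MeasureTheory.volume.restrict (Set.Icc (-1:ℝ) 1))) :
    let sol : ℝ → ℝ := fun z =>
      (1 / (1 + lam₁ - z)) *
        (F z + (1 / (2 * ((m : ℝ) - (n : ℝ)))) *
          ∫ w in (-1:ℝ)..1, φ' w * F w / (1 + lam₁ - w))
    (∀ z ∈ Set.Icc (-1:ℝ) 1,
        (1 + lam₁ - z) * sol z + (1 / (2 * n)) * (∫ w in (-1:ℝ)..1, φ' w * sol w) = F z) ∧
    (∀ f : ℝ → ℝ, MemLp f 2 (MeasureTheory.volume.restrict (Set.Icc (-1:ℝ) 1)) →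
      (∀ z ∈ Set.Icc (-1:ℝ) 1,
        (1 + lam₁ - z) * f z + (1 / (2 * n)) * (∫ w in (-1:ℝ)..1, φ' w * f w) = F z) →
      ∀ z ∈ Set.Icc (-1:ℝ) 1, f z = sol z) := by
  intro sol
  set μ := volume.restrict (Icc (-1:ℝ) 1)
  have h_int : ∀ g : ℝ → ℝ, ∫ w in (-1:ℝ)..1, g w = ∫ w, g w ∂μ := fun g => by
    rw [intervalIntegral.integral_of_le (by norm_num), integral_Icc_eq_integral_Ioc]
  have ha : ∀ z ∈ Icc (-1:ℝ) 1, 1 + lam₁ - z ≠ 0 := fun z hz =>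
    (show (0:ℝ) < 1 + lam₁ - z by linarith [hz.2]).ne'
  have hn0 : (n : ℝ) ≠ 0 := by positivity
  have hmn0 : (m : ℝ) - n ≠ 0 := sub_ne_zero.mpr (by exact_mod_cast hmn)
  obtain ⟨hK_int, hK⟩ :=
    integrable_div_and_integral_eq_of_eigenvalue_relation (by simpa only [h_int] using heq)
  have hK_bound : ∀ᵐ z ∂μ, ‖φ' z / (1 + lam₁ - z)‖ ≤ Cφ / lam₁ :=
    (ae_restrict_mem measurableSet_Icc).mono fun z hz => norm_div_one_add_sub_le hlam (hφb z) hz.2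
  have hJ_int : Integrable (fun z => φ' z * F z / (1 + lam₁ - z)) μ := by
    convert (hF.integrable (by norm_num)).bdd_mul hK_int.aestronglyMeasurable hK_bound using 2
    ring
  have hc : 1 / (2 * ((m : ℝ) - n)) * (∫ z, φ' z * F z / (1 + lam₁ - z) ∂μ) *
      (1 + 1 / (2 * n) * ∫ z, φ' z / (1 + lam₁ - z) ∂μ) =
      -(1 / (2 * n)) * ∫ z, φ' z * F z / (1 + lam₁ - z) ∂μ := by
    rw [hK]; field_simp; ring
  have hK_ne : 1 + 1 / (2 * (n : ℝ)) * ∫ z, φ' z / (1 + lam₁ - z) ∂μ ≠ 0 := by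
    rw [hK, show 1 + 1 / (2 * (n : ℝ)) * -(2 * m) = -((m - n) / n) by field_simp; ring]
    exact neg_ne_zero.mpr (div_ne_zero hmn0 hn0)
  simp only [sol, h_int]
  exact ⟨rankOne_solution_spec ha hK_int hJ_int hc, fun f _ hf =>
    rankOne_solution_unique (ae_restrict_mem measurableSet_Icc) ha hK_int hJ_int hK_ne hc hf⟩

theorem inversion_off_resonant_mode (lam₁ : ℝ) (hlam : 0 < lam₁)
    (m n : ℕ) (hm : 1 ≤ m) (hn : 1 ≤ n) (hmn : m ≠ n)
    (φ' : ℝ → ℝ) (hφmeas : Measurable φ') (Cφ : ℝ) (hφb : ∀ z, |φ' z| ≤ Cφ)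
    (heq : 1 = (1 / (2 * m)) * ∫ z in (-1:ℝ)..1, (-φ' z) / (1 + lam₁ - z))
    (F : ℝ → ℝ) (hF : MemLp F 2 (MeasureTheory.volume.restrict (Set.Icc (-1:ℝ) 1))) :
    let sol : ℝ → ℝ := fun z =>
      (1 / (1 + lam₁ - z)) *
        (F z + (1 / (2 * ((m : ℝ) - (n : ℝ)))) *
          ∫ w in (-1:ℝ)..1, φ' w * F w / (1 + lam₁ - w))
    (∀ z ∈ Set.Icc (-1:ℝ) 1,
        (1 + lam₁ - z) * sol z + (1 / (2 * n)) * (∫ w in (-1:ℝ)..1, φ' w * sol w) = F z) ∧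
    (∀ f : ℝ → ℝ, MemLp f 2 (MeasureTheory.volume.restrict (Set.Icc (-1:ℝ) 1)) →
      (∀ z ∈ Set.Icc (-1:ℝ) 1,
        (1 + lam₁ - z) * f z + (1 / (2 * n)) * (∫ w in (-1:ℝ)..1, φ' w * f w) = F z) →
      ∀ z ∈ Set.Icc (-1:ℝ) 1, f z = sol z) :=
  inversion_off_resonant_mode_general lam₁ hlam m n hn hmn φ' Cφ hφb heq F hF
end

section
/- Define T⁺[u,v](z) = Λ⁺(z) u(z) - (ε/(2n)) ∫_{-1}^1 φ'(z̄) u(z̄) e^{-εn|z-z̄|} dz̄ + (ε e^{-2n}/(2n)) ∫_{-1}^1 φ'(z̄) v(z̄) e^{-nε(z+z̄)} dz̄ and T⁻[u,v](z) = Λ⁻(z) v(z) + (ε/(2n)) ∫_{-1}^1 φ'(z̄) v(z̄) e^{-εn|z-z̄|} dz̄ - (ε e^{-2n}/(2n)) ∫_{-1}^1 φ'(z̄) u(z̄) e^{-nε(z+z̄)} dz̄, for given bounded functions Λ⁺, Λ⁻ and φ' ∈ L^∞([-1,1]). Then for all f, g, u, v ∈ L²([-1,1]): -∫_{-1}^1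 T⁺[u,v] φ' f dz + ∫_{-1}^1 T⁻[u,v] φ' g dz = -∫_{-1}^1 φ' u T⁺[f,g] dz + ∫_{-1}^1 φ' v T⁻[f,g] dz. -/
open Real MeasureTheory Set

noncomputable def Tplus (Λp φ' : ℝ → ℝ) (ε : ℝ) (n : ℕ) (u v : ℝ → ℝ) : ℝ → ℝ :=
  fun z => Λp z * u z
    - (ε / (2 * n)) * (∫ w in Icc (-1:ℝ) 1, φ' w * u w * Real.exp (-(ε * n) * |z - w|))
    + (ε * Real.exp (-2 * (n : ℝ)) / (2 * n)) *
        (∫ w in Icc (-1:ℝ) 1, φ' w * v w * Real.exp (-((n : ℝ) * ε) * (z + w)))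

noncomputable def Tminus (Λm φ' : ℝ → ℝ) (ε : ℝ) (n : ℕ) (u v : ℝ → ℝ) : ℝ → ℝ :=
  fun z => Λm z * v z
    + (ε / (2 * n)) * (∫ w in Icc (-1:ℝ) 1, φ' w * v w * Real.exp (-(ε * n) * |z - w|))
    - (ε * Real.exp (-2 * (n : ℝ)) / (2 * n)) *
        (∫ w in Icc (-1:ℝ) 1, φ' w * u w * Real.exp (-((n : ℝ) * ε) * (z + w)))

/-!
Pair both sides out. The multiplication parts `Λ± u φ' f` agree pointwise, and every integral
term becomes `∫∫ F(w) K(z, w) G(z) dw dz` for one of the two kernels `K`. The kernels are bounded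
on `[-1, 1]²` and `F, G ∈ L¹`, so Fubini applies and, `K` being symmetric, the roles of `F` and `G`
may be exchanged. The `e^{-nε(z+w)}` terms then match across `T⁺` and `T⁻`, which is where the
opposite signs of the two pairings are needed.
-/

open Function
open scoped ENNReal

lemma memLp_top_of_abs_le {α : Type*} [MeasurableSpace α] {μ : Measure α} {f : α → ℝ}
    (hf : Measurable f) {C : ℝ} (hC : ∀ x, |f x| ≤ C) : MemLp f ∞ μ :=
  memLp_top_of_bound hf.aestronglyMeasurable C (ae_of_all _ hC)

lemma integrable_mul_mul_mul_of_memLp {α : Type*} [MeasurableSpace α] {μ : Measure α}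
    {Λ φ X Y : α → ℝ} (hΛ : MemLp Λ ∞ μ) (hφ : MemLp φ ∞ μ) (hX : MemLp X 2 μ)
    (hY : MemLp Y 2 μ) : Integrable (fun z => Λ z * X z * (φ z * Y z)) μ :=
  ((hX.integrable_mul hY).mul_of_top_right (hφ.mul hΛ)).congr <| ae_of_all _ fun z => by
    simp only [Pi.mul_apply]; ring

section SymmetricKernel

variable {α : Type*} [MeasurableSpace α] {μ : Measure α} {K : α → α → ℝ} {F G : α → ℝ}

noncomputable def kernelPairing (μ : Measure α) (K : α → α → ℝ) (F G : α → ℝ) : ℝ :=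
  ∫ z, (∫ w, F w * K z w ∂μ) * G z ∂μ

lemma integrable_mul_kernel_mul (hK : MemLp (uncurry K) ∞ (μ.prod μ)) (hF : Integrable F μ)
    (hG : Integrable G μ) :
    Integrable (fun p : α × α => F p.2 * K p.1 p.2 * G p.1) (μ.prod μ) :=
  ((hG.mul_prod hF).mul_of_top_left hK).congr <| ae_of_all _ fun p => by
    simp only [Pi.mul_apply, uncurry_def]; ring

variable [SFinite μ]

lemma integrable_integral_mul_kernel_mul (hK : MemLp (uncurry K) ∞ (μ.prod μ))
    (hF : Integrable F μ) (hG : Integrable G μ) :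
    Integrable (fun z => (∫ w, F w * K z w ∂μ) * G z) μ := by
  simpa only [integral_mul_const] using (integrable_mul_kernel_mul hK hF hG).integral_prod_left

lemma kernelPairing_comm (hsymm : ∀ z w, K z w = K w z) (hK : MemLp (uncurry K) ∞ (μ.prod μ))
    (hF : Integrable F μ) (hG : Integrable G μ) :
    kernelPairing μ K F G = kernelPairing μ K G F := by
  calc kernelPairing μ K F G = ∫ z, ∫ w, F w * K z w * G z ∂μ ∂μ := by
        simp only [kernelPairing, integral_mul_const]
    _ = ∫ w, ∫ z, F w * K z w * G z ∂μ ∂μ :=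
        integral_integral_swap (integrable_mul_kernel_mul hK hF hG)
    _ = kernelPairing μ K G F := by
        simp only [kernelPairing, ← integral_mul_const]
        congr 1 with w
        congr 1 with z
        rw [hsymm]; ring

end SymmetricKernel

lemma Continuous.memLp_top_prod_restrict {α : Type*} [TopologicalSpace α] [MeasurableSpace α]
    [OpensMeasurableSpace α] [SecondCountableTopology α] [T2Space α] {μ : Measure α} [SFinite μ]
    {s : Set α} (hs : IsCompact s) {K : α → α → ℝ} (hK : Continuous (uncurry K)) :
    MemLp (uncurry K) ∞ ((μ.restrict s).prod (μ.restrict s)) := by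
  obtain ⟨C, hC⟩ := (hs.prod hs).exists_bound_of_continuousOn hK.continuousOn
  rw [Measure.prod_restrict]
  refine memLp_top_of_bound hK.aestronglyMeasurable C ?_
  filter_upwards [ae_restrict_mem (hs.measurableSet.prod hs.measurableSet)] with p hp
  exact hC p hp

noncomputable def expAbsSubKernel (ε : ℝ) (n : ℕ) (z w : ℝ) : ℝ := exp (-(ε * n) * |z - w|)

noncomputable def expAddKernel (ε : ℝ) (n : ℕ) (z w : ℝ) : ℝ := exp (-((n : ℝ) * ε) * (z + w))

lemma expAbsSubKernel_comm (ε : ℝ) (n : ℕ) (z w : ℝ) :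
    expAbsSubKernel ε n z w = expAbsSubKernel ε n w z := by
  rw [expAbsSubKernel, expAbsSubKernel, abs_sub_comm]

lemma expAddKernel_comm (ε : ℝ) (n : ℕ) (z w : ℝ) :
    expAddKernel ε n z w = expAddKernel ε n w z := by
  rw [expAddKernel, expAddKernel, add_comm z]

local notation "μ₁" => volume.restrict (Icc (-1 : ℝ) 1)

lemma memLp_top_expAbsSubKernel (ε : ℝ) (n : ℕ) :
    MemLp (uncurry (expAbsSubKernel ε n)) ∞ (Measure.prod μ₁ μ₁) :=
  Continuous.memLp_top_prod_restrict (K := expAbsSubKernel ε n) isCompact_Icc <| by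
    simp only [uncurry_def, expAbsSubKernel]; fun_prop

lemma memLp_top_expAddKernel (ε : ℝ) (n : ℕ) :
    MemLp (uncurry (expAddKernel ε n)) ∞ (Measure.prod μ₁ μ₁) :=
  Continuous.memLp_top_prod_restrict (K := expAddKernel ε n) isCompact_Icc <| by
    simp only [uncurry_def, expAddKernel]; fun_prop

section Expansion

variable {Λ φ' u v R : ℝ → ℝ} (ε : ℝ) (n : ℕ)

lemma integral_Tplus_mul (hΛ : Integrable (fun z => Λ z * u z * R z) μ₁)
    (hu : Integrable (fun w => φ' w * u w) μ₁) (hv : Integrable (fun w => φ' w * v w) μ₁)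
    (hR : Integrable R μ₁) :
    ∫ z in Icc (-1 : ℝ) 1, Tplus Λ φ' ε n u v z * R z =
      (∫ z in Icc (-1 : ℝ) 1, Λ z * u z * R z)
        - ε / (2 * n) * kernelPairing μ₁ (expAbsSubKernel ε n) (fun w => φ' w * u w) R
        + ε * exp (-2 * (n : ℝ)) / (2 * n) *
          kernelPairing μ₁ (expAddKernel ε n) (fun w => φ' w * v w) R := by
  have h₁ := (integrable_integral_mul_kernel_mul (memLp_top_expAbsSubKernel ε n) hu hR).const_mul
    (ε / (2 * n))
  have h₂ := (integrable_integral_mul_kernel_mul (memLp_top_expAddKernel ε n) hv hR).const_mul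
    (ε * exp (-2 * (n : ℝ)) / (2 * n))
  rw [kernelPairing, kernelPairing, ← integral_const_mul, ← integral_const_mul,
    ← integral_sub hΛ h₁, ← integral_add (hΛ.sub' h₁) h₂]
  congr 1 with z
  simp only [Tplus, expAbsSubKernel, expAddKernel]
  ring

lemma integral_Tminus_mul (hΛ : Integrable (fun z => Λ z * v z * R z) μ₁)
    (hu : Integrable (fun w => φ' w * u w) μ₁) (hv : Integrable (fun w => φ' w * v w) μ₁)
    (hR : Integrable R μ₁) :
    ∫ z in Icc (-1 : ℝ) 1, Tminus Λ φ' ε n u v z * R z =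
      (∫ z in Icc (-1 : ℝ) 1, Λ z * v z * R z)
        + ε / (2 * n) * kernelPairing μ₁ (expAbsSubKernel ε n) (fun w => φ' w * v w) R
        - ε * exp (-2 * (n : ℝ)) / (2 * n) *
          kernelPairing μ₁ (expAddKernel ε n) (fun w => φ' w * u w) R := by
  have h₁ := (integrable_integral_mul_kernel_mul (memLp_top_expAbsSubKernel ε n) hv hR).const_mul
    (ε / (2 * n))
  have h₂ := (integrable_integral_mul_kernel_mul (memLp_top_expAddKernel ε n) hu hR).const_mul
    (ε * exp (-2 * (n : ℝ)) / (2 * n))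
  rw [kernelPairing, kernelPairing, ← integral_const_mul, ← integral_const_mul,
    ← integral_add hΛ h₁, ← integral_sub (hΛ.fun_add h₁) h₂]
  congr 1 with z
  simp only [Tminus, expAbsSubKernel, expAddKernel]
  ring

end Expansion

theorem adjointness_identity_general (Λp Λm φ' : ℝ → ℝ) (ε : ℝ) (n : ℕ)
    (hφm : Measurable φ') (Cφ : ℝ) (hφb : ∀ z, |φ' z| ≤ Cφ)
    (hΛpm : Measurable Λp) (CΛ : ℝ) (hΛpb : ∀ z, |Λp z| ≤ CΛ)
    (hΛmm : Measurable Λm) (hΛmb : ∀ z, |Λm z| ≤ CΛ)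
    (f g u v : ℝ → ℝ)
    (hf : MemLp f 2 (MeasureTheory.volume.restrict (Icc (-1:ℝ) 1)))
    (hg : MemLp g 2 (MeasureTheory.volume.restrict (Icc (-1:ℝ) 1)))
    (hu : MemLp u 2 (MeasureTheory.volume.restrict (Icc (-1:ℝ) 1)))
    (hv : MemLp v 2 (MeasureTheory.volume.restrict (Icc (-1:ℝ) 1))) :
    -(∫ z in Icc (-1:ℝ) 1, Tplus Λp φ' ε n u v z * φ' z * f z)
        + (∫ z in Icc (-1:ℝ) 1, Tminus Λm φ' ε n u v z * φ' z * g z)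
      = -(∫ z in Icc (-1:ℝ) 1, φ' z * u z * Tplus Λp φ' ε n f g z)
        + (∫ z in Icc (-1:ℝ) 1, φ' z * v z * Tminus Λm φ' ε n f g z) := by
  have hφ : MemLp φ' ∞ μ₁ := memLp_top_of_abs_le hφm hφb
  have hΛp : MemLp Λp ∞ μ₁ := memLp_top_of_abs_le hΛpm hΛpb
  have hΛm : MemLp Λm ∞ μ₁ := memLp_top_of_abs_le hΛmm hΛmb
  have hφX {X : ℝ → ℝ} (hX : MemLp X 2 μ₁) : Integrable (fun z => φ' z * X z) μ₁ :=
    (hX.integrable one_le_two).mul_of_top_right hφ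
  have hΛX {Λ X Y : ℝ → ℝ} (hΛ : MemLp Λ ∞ μ₁) (hX : MemLp X 2 μ₁) (hY : MemLp Y 2 μ₁) :
      Integrable (fun z => Λ z * X z * (φ' z * Y z)) μ₁ :=
    integrable_mul_mul_mul_of_memLp hΛ hφ hX hY
  have hK₁ {F G : ℝ → ℝ} := kernelPairing_comm (F := F) (G := G) (expAbsSubKernel_comm ε n)
    (memLp_top_expAbsSubKernel ε n)
  have hK₂ {F G : ℝ → ℝ} := kernelPairing_comm (F := F) (G := G) (expAddKernel_comm ε n)
    (memLp_top_expAddKernel ε n)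
  have hΛswap {Λ X Y : ℝ → ℝ} : ∫ z in Icc (-1 : ℝ) 1, Λ z * X z * (φ' z * Y z) =
      ∫ z in Icc (-1 : ℝ) 1, Λ z * Y z * (φ' z * X z) := by
    congr 1 with z; ring
  -- every integrand into the form `T z * (φ' z * X z)` expected by the expansion lemmas
  simp only [mul_assoc _ (φ' _), mul_comm (φ' _ * _)]
  rw [integral_Tplus_mul ε n (hΛX hΛp hu hf) (hφX hu) (hφX hv) (hφX hf),
    integral_Tminus_mul ε n (hΛX hΛm hv hg) (hφX hu) (hφX hv) (hφX hg),
    integral_Tplus_mul ε n (hΛX hΛp hf hu) (hφX hf) (hφX hg) (hφX hu),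
    integral_Tminus_mul ε n (hΛX hΛm hg hv) (hφX hf) (hφX hg) (hφX hv),
    hΛswap (X := f), hΛswap (X := g), hK₁ (hφX hf) (hφX hu), hK₁ (hφX hg) (hφX hv),
    hK₂ (hφX hg) (hφX hu), hK₂ (hφX hf) (hφX hv)]
  ring

theorem adjointness_identity (Λp Λm φ' : ℝ → ℝ) (ε : ℝ) (n : ℕ) (hn : 1 ≤ n)
    (hφm : Measurable φ') (Cφ : ℝ) (hφb : ∀ z, |φ' z| ≤ Cφ)
    (hΛpm : Measurable Λp) (CΛ : ℝ) (hΛpb : ∀ z, |Λp z| ≤ CΛ)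
    (hΛmm : Measurable Λm) (hΛmb : ∀ z, |Λm z| ≤ CΛ)
    (f g u v : ℝ → ℝ)
    (hf : MemLp f 2 (MeasureTheory.volume.restrict (Icc (-1:ℝ) 1)))
    (hg : MemLp g 2 (MeasureTheory.volume.restrict (Icc (-1:ℝ) 1)))
    (hu : MemLp u 2 (MeasureTheory.volume.restrict (Icc (-1:ℝ) 1)))
    (hv : MemLp v 2 (MeasureTheory.volume.restrict (Icc (-1:ℝ) 1))) :
    -(∫ z in Icc (-1:ℝ) 1, Tplus Λp φ' ε n u v z * φ' z * f z)
        + (∫ z in Icc (-1:ℝ) 1, Tminus Λm φ' ε n u v z * φ' z * g z)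
      = -(∫ z in Icc (-1:ℝ) 1, φ' z * u z * Tplus Λp φ' ε n f g z)
        + (∫ z in Icc (-1:ℝ) 1, φ' z * v z * Tminus Λm φ' ε n f g z) :=
  adjointness_identity_general Λp Λm φ' ε n hφm Cφ hφb hΛpm CΛ hΛpb hΛmm hΛmb f g u v hf hg hu hv
end

section
/- With T⁺, T⁻ as in the adjointness lemma: if (a,b) ∈ L²([-1,1])² satisfies T⁺[a,b] = 0 and T⁻[a,b] = 0, and (u,v) ∈ L²([-1,1])² satisfies T⁺[u,v] = -W⁺/n and T⁻[u,v] = -W⁻/n for some W⁺, W⁻ ∈ L²([-1,1]) and n ≥ 1, then -∫_{-1}^1 W⁺ φ' a dz + ∫_{-1}^1 W⁻ φ' b dz = 0. -/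
/-!
Pair both systems with the weight `φ'`. The multiplication parts `Λ± · u` of `T±` cancel
pointwise in `φ' u T⁺[a,b] - φ' a T⁺[u,v]`, and what remains of the integral parts is a sum of
terms `f · K g - g · K f` with the symmetric kernels `exp(-εn|z-w|)` and `exp(-nε(z+w))`, whose
integrals vanish by Fubini. Substituting `T±[a,b] = 0` and `T±[u,v] = -W±/n` then leaves
`(∫ W⁺ φ' a - ∫ W⁻ φ' b) / n = 0`.
-/

open Real MeasureTheory Set

open Function

section BoundedKernel

variable {α : Type*} [MeasurableSpace α] {μ : Measure α}
  {K : α → α → ℝ} {C : ℝ} {f g : α → ℝ}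

theorem integrable_prod_mul_kernel (hK : AEStronglyMeasurable (uncurry K) (μ.prod μ))
    (hKC : ∀ᵐ p ∂μ.prod μ, ‖uncurry K p‖ ≤ C) (hf : Integrable f μ) (hg : Integrable g μ) :
    Integrable (uncurry fun x y => f x * (g y * K x y)) (μ.prod μ) :=
  ((hf.mul_prod hg).mul_bdd hK hKC).congr (ae_of_all _ fun p => by simp only [uncurry]; ring)

theorem integrable_mul_integral_kernel [SFinite μ]
    (hK : AEStronglyMeasurable (uncurry K) (μ.prod μ))
    (hKC : ∀ᵐ p ∂μ.prod μ, ‖uncurry K p‖ ≤ C) (hf : Integrable f μ) (hg : Integrable g μ) :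
    Integrable (fun x => f x * ∫ y, g y * K x y ∂μ) μ := by
  simpa only [uncurry_apply_pair, integral_const_mul] using
    (integrable_prod_mul_kernel hK hKC hf hg).integral_prod_left

theorem integral_mul_integral_kernel_comm [SFinite μ]
    (hK : AEStronglyMeasurable (uncurry K) (μ.prod μ))
    (hKC : ∀ᵐ p ∂μ.prod μ, ‖uncurry K p‖ ≤ C) (hsymm : ∀ x y, K x y = K y x)
    (hf : Integrable f μ) (hg : Integrable g μ) :
    ∫ x, f x * ∫ y, g y * K x y ∂μ ∂μ = ∫ x, g x * ∫ y, f y * K x y ∂μ ∂μ :=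
  calc ∫ x, f x * ∫ y, g y * K x y ∂μ ∂μ = ∫ x, ∫ y, f x * (g y * K x y) ∂μ ∂μ := by
        simp only [integral_const_mul]
    _ = ∫ y, ∫ x, f x * (g y * K x y) ∂μ ∂μ :=
        integral_integral_swap (integrable_prod_mul_kernel hK hKC hf hg)
    _ = ∫ y, g y * ∫ x, f x * K y x ∂μ ∂μ := by
        congr 1 with y
        rw [← integral_const_mul]
        congr 1 with x
        rw [hsymm]
        ring

noncomputable def kernelSkew (μ : Measure α) (K : α → α → ℝ) (f g : α → ℝ) (x : α) : ℝ :=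
  f x * ∫ y, g y * K x y ∂μ - g x * ∫ y, f y * K x y ∂μ

theorem integrable_kernelSkew [SFinite μ]
    (hK : AEStronglyMeasurable (uncurry K) (μ.prod μ))
    (hKC : ∀ᵐ p ∂μ.prod μ, ‖uncurry K p‖ ≤ C) (hf : Integrable f μ) (hg : Integrable g μ) :
    Integrable (kernelSkew μ K f g) μ :=
  (integrable_mul_integral_kernel hK hKC hf hg).sub (integrable_mul_integral_kernel hK hKC hg hf)

theorem integral_kernelSkew_eq_zero [SFinite μ]
    (hK : AEStronglyMeasurable (uncurry K) (μ.prod μ))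
    (hKC : ∀ᵐ p ∂μ.prod μ, ‖uncurry K p‖ ≤ C) (hsymm : ∀ x y, K x y = K y x)
    (hf : Integrable f μ) (hg : Integrable g μ) :
    ∫ x, kernelSkew μ K f g x ∂μ = 0 := by
  unfold kernelSkew
  rw [integral_sub (integrable_mul_integral_kernel hK hKC hf hg)
    (integrable_mul_integral_kernel hK hKC hg hf),
    integral_mul_integral_kernel_comm hK hKC hsymm hf hg, sub_self]

end BoundedKernel

theorem ae_restrict_prod_norm_le_of_continuous {α : Type*} [TopologicalSpace α]
    [MeasurableSpace α] [OpensMeasurableSpace α] [T2Space α] {μ : Measure α} [SFinite μ]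
    {K : α → α → ℝ} (hK : Continuous (uncurry K)) {s : Set α} (hs : IsCompact s) :
    ∃ C, ∀ᵐ p ∂(μ.restrict s).prod (μ.restrict s), ‖uncurry K p‖ ≤ C := by
  obtain ⟨C, hC⟩ := (hs.prod hs).exists_bound_of_continuousOn hK.continuousOn
  refine ⟨C, ?_⟩
  rw [Measure.prod_restrict]
  exact ae_restrict_of_forall_mem (hs.measurableSet.prod hs.measurableSet) hC

theorem integral_adjoint_defect_Tplus_Tminus (Λp Λm φ' : ℝ → ℝ) (ε : ℝ) (n : ℕ)
    (hφm : Measurable φ') (Cφ : ℝ) (hφb : ∀ z, |φ' z| ≤ Cφ) (a b u v : ℝ → ℝ)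
    (ha : IntegrableOn a (Icc (-1) 1)) (hb : IntegrableOn b (Icc (-1) 1))
    (hu : IntegrableOn u (Icc (-1) 1)) (hv : IntegrableOn v (Icc (-1) 1)) :
    ∫ z in Icc (-1:ℝ) 1, (φ' z * u z * Tplus Λp φ' ε n a b z
      - φ' z * v z * Tminus Λm φ' ε n a b z
      - (φ' z * a z * Tplus Λp φ' ε n u v z - φ' z * b z * Tminus Λm φ' ε n u v z)) = 0 := by
  set μ := volume.restrict (Icc (-1:ℝ) 1)
  set K₁ : ℝ → ℝ → ℝ := fun z w => Real.exp (-(ε * n) * |z - w|)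
  set K₂ : ℝ → ℝ → ℝ := fun z w => Real.exp (-((n : ℝ) * ε) * (z + w))
  have hK₁ : Continuous (uncurry K₁) := by unfold K₁; fun_prop
  have hK₂ : Continuous (uncurry K₂) := by unfold K₂; fun_prop
  obtain ⟨C₁, hC₁⟩ := ae_restrict_prod_norm_le_of_continuous hK₁
    (μ := volume) (isCompact_Icc (a := (-1 : ℝ)) (b := 1))
  obtain ⟨C₂, hC₂⟩ := ae_restrict_prod_norm_le_of_continuous hK₂
    (μ := volume) (isCompact_Icc (a := (-1 : ℝ)) (b := 1))
  have hK₁symm : ∀ z w, K₁ z w = K₁ w z := fun z w => by simp only [K₁, abs_sub_comm]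
  have hK₂symm : ∀ z w, K₂ z w = K₂ w z := fun z w => by simp only [K₂, add_comm]
  have hweight : ∀ x : ℝ → ℝ, Integrable x μ → Integrable (fun z => φ' z * x z) μ :=
    fun x hx => hx.bdd_mul hφm.aestronglyMeasurable (ae_of_all _ hφb)
  have hpointwise : (fun z => φ' z * u z * Tplus Λp φ' ε n a b z
      - φ' z * v z * Tminus Λm φ' ε n a b z
      - (φ' z * a z * Tplus Λp φ' ε n u v z - φ' z * b z * Tminus Λm φ' ε n u v z))
      = fun z => ε / (2 * n) * (kernelSkew μ K₁ (fun z => φ' z * a z) (fun z => φ' z * u z) z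
          + kernelSkew μ K₁ (fun z => φ' z * b z) (fun z => φ' z * v z) z)
        - ε * Real.exp (-2 * (n : ℝ)) / (2 * n) *
          (kernelSkew μ K₂ (fun z => φ' z * a z) (fun z => φ' z * v z) z
          + kernelSkew μ K₂ (fun z => φ' z * b z) (fun z => φ' z * u z) z) := by
    funext z
    simp only [Tplus, Tminus, kernelSkew, K₁, K₂, μ]
    ring
  have hA := hweight a ha
  have hB := hweight b hb
  have hU := hweight u hu
  have hV := hweight v hv
  have hK₁m := hK₁.aestronglyMeasurable (μ := μ.prod μ)
  have hK₂m := hK₂.aestronglyMeasurable (μ := μ.prod μ)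
  have hAU := integrable_kernelSkew hK₁m hC₁ hA hU
  have hBV := integrable_kernelSkew hK₁m hC₁ hB hV
  have hAV := integrable_kernelSkew hK₂m hC₂ hA hV
  have hBU := integrable_kernelSkew hK₂m hC₂ hB hU
  rw [hpointwise, integral_sub, integral_const_mul, integral_const_mul,
    integral_add hAU hBV, integral_add hAV hBU,
    integral_kernelSkew_eq_zero hK₁m hC₁ hK₁symm hA hU,
    integral_kernelSkew_eq_zero hK₁m hC₁ hK₁symm hB hV,
    integral_kernelSkew_eq_zero hK₂m hC₂ hK₂symm hA hV,
    integral_kernelSkew_eq_zero hK₂m hC₂ hK₂symm hB hU]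
  · simp
  · exact (hAU.add hBV).const_mul _
  · exact (hAV.add hBU).const_mul _

theorem fredholm_orthogonality_condition_general (Λp Λm φ' : ℝ → ℝ) (ε : ℝ) (n : ℕ) (hn : 1 ≤ n)
    (hφm : Measurable φ') (Cφ : ℝ) (hφb : ∀ z, |φ' z| ≤ Cφ)
    (a b u v Wp Wm : ℝ → ℝ)
    (ha : MemLp a 2 (MeasureTheory.volume.restrict (Icc (-1:ℝ) 1)))
    (hb : MemLp b 2 (MeasureTheory.volume.restrict (Icc (-1:ℝ) 1)))
    (hu : MemLp u 2 (MeasureTheory.volume.restrict (Icc (-1:ℝ) 1)))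
    (hv : MemLp v 2 (MeasureTheory.volume.restrict (Icc (-1:ℝ) 1)))
    (hWp : MemLp Wp 2 (MeasureTheory.volume.restrict (Icc (-1:ℝ) 1)))
    (hWm : MemLp Wm 2 (MeasureTheory.volume.restrict (Icc (-1:ℝ) 1)))
    (hab₁ : ∀ z ∈ Icc (-1:ℝ) 1, Tplus Λp φ' ε n a b z = 0)
    (hab₂ : ∀ z ∈ Icc (-1:ℝ) 1, Tminus Λm φ' ε n a b z = 0)
    (huv₁ : ∀ z ∈ Icc (-1:ℝ) 1, Tplus Λp φ' ε n u v z = -(Wp z) / n)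
    (huv₂ : ∀ z ∈ Icc (-1:ℝ) 1, Tminus Λm φ' ε n u v z = -(Wm z) / n) :
    -(∫ z in Icc (-1:ℝ) 1, Wp z * φ' z * a z)
        + (∫ z in Icc (-1:ℝ) 1, Wm z * φ' z * b z) = 0 := by
  have hn₀ : (n : ℝ) ≠ 0 := Nat.cast_ne_zero.2 (by omega)
  have hweighted : ∀ W x : ℝ → ℝ, MemLp W 2 (volume.restrict (Icc (-1:ℝ) 1)) →
      MemLp x 2 (volume.restrict (Icc (-1:ℝ) 1)) →
      IntegrableOn (fun z => W z * φ' z * x z) (Icc (-1) 1) := fun W x hW hx =>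
    ((hW.integrable_mul hx).bdd_mul hφm.aestronglyMeasurable (ae_of_all _ hφb)).congr
      (ae_of_all _ fun z => by simp only [Pi.mul_apply]; ring)
  have hdefect := integral_adjoint_defect_Tplus_Tminus Λp Λm φ' ε n hφm Cφ hφb a b u v
    (ha.integrable one_le_two) (hb.integrable one_le_two)
    (hu.integrable one_le_two) (hv.integrable one_le_two)
  rw [setIntegral_congr_fun (g := fun z => (Wp z * φ' z * a z - Wm z * φ' z * b z) / n)
      measurableSet_Icc fun z hz => by
        simp only [hab₁ z hz, hab₂ z hz, huv₁ z hz, huv₂ z hz]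
        ring,
    integral_div, integral_sub (hweighted Wp a hWp ha) (hweighted Wm b hWm hb),
    div_eq_zero_iff, or_iff_left hn₀] at hdefect
  linarith

theorem fredholm_orthogonality_condition (Λp Λm φ' : ℝ → ℝ) (ε : ℝ) (n : ℕ) (hn : 1 ≤ n)
    (hφm : Measurable φ') (Cφ : ℝ) (hφb : ∀ z, |φ' z| ≤ Cφ)
    (hΛpm : Measurable Λp) (CΛ : ℝ) (hΛpb : ∀ z, |Λp z| ≤ CΛ)
    (hΛmm : Measurable Λm) (hΛmb : ∀ z, |Λm z| ≤ CΛ)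
    (a b u v Wp Wm : ℝ → ℝ)
    (ha : MemLp a 2 (MeasureTheory.volume.restrict (Icc (-1:ℝ) 1)))
    (hb : MemLp b 2 (MeasureTheory.volume.restrict (Icc (-1:ℝ) 1)))
    (hu : MemLp u 2 (MeasureTheory.volume.restrict (Icc (-1:ℝ) 1)))
    (hv : MemLp v 2 (MeasureTheory.volume.restrict (Icc (-1:ℝ) 1)))
    (hWp : MemLp Wp 2 (MeasureTheory.volume.restrict (Icc (-1:ℝ) 1)))
    (hWm : MemLp Wm 2 (MeasureTheory.volume.restrict (Icc (-1:ℝ) 1)))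
    (hab₁ : ∀ z ∈ Icc (-1:ℝ) 1, Tplus Λp φ' ε n a b z = 0)
    (hab₂ : ∀ z ∈ Icc (-1:ℝ) 1, Tminus Λm φ' ε n a b z = 0)
    (huv₁ : ∀ z ∈ Icc (-1:ℝ) 1, Tplus Λp φ' ε n u v z = -(Wp z) / n)
    (huv₂ : ∀ z ∈ Icc (-1:ℝ) 1, Tminus Λm φ' ε n u v z = -(Wm z) / n) :
    -(∫ z in Icc (-1:ℝ) 1, Wp z * φ' z * a z)
        + (∫ z in Icc (-1:ℝ) 1, Wm z * φ' z * b z) = 0 :=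
  fredholm_orthogonality_condition_general Λp Λm φ' ε n hn hφm Cφ hφb a b u v Wp Wm ha hb hu hv hWp
    hWm hab₁ hab₂ huv₁ huv₂
end
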